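/- Suppose n = 2k with k ≥ 2. Then for all λ ∈ ℂ, (t_1 t_2)^{−k}·det(λ·1_n − H) = U_k(Q) + ((z_1 z_n − t_L t_R)/t_2²)·U_{k−2}(Q) + ((t_2² − λ(z_1 + z_n) + z_1 z_n − t_L t_R)/(t_1 t_2))·U_{k−1}(Q) − (t_L + t_R)/t_2. -/

import Mathlib

open Matrix Complex Polynomial

/-- The `n`-site SSH chain with alternating hoppings `t1` (odd bonds) and `t2`
(even bonds), defect potentials `z1`, `zn` at the two ends, and corner
entries `tL` (top-right) and `tR` (bottom-left). -/
noncomputable def Hssh (n : ℕ) (t1 t2 : ℝ) (z1 zn tL tR : ℂ) :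
    Matrix (Fin n) (Fin n) ℂ :=
  fun i j =>
    if (i : ℕ) = (j : ℕ) then
      (if (i : ℕ) = 0 then z1 else if (i : ℕ) = n - 1 then zn else 0)
    else if (i : ℕ) + 1 = (j : ℕ) then
      (if (i : ℕ) % 2 = 0 then (t1 : ℂ) else (t2 : ℂ))
    else if (j : ℕ) + 1 = (i : ℕ) then
      (if (j : ℕ) % 2 = 0 then (t1 : ℂ) else (t2 : ℂ))
    else if (i : ℕ) = 0 ∧ (j : ℕ) = n - 1 then tL
    else if (i : ℕ) = n - 1 ∧ (j : ℕ) = 0 then tR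
    else 0

/-!
`λ • 1 - H` is the tridiagonal matrix `T` with constant diagonal `λ` and alternating
off-diagonal entries `-t₁, -t₂, -t₁, …`, plus the four corner entries `-z₁, -zₙ, -t_R, -t_L`.
Adding `c` at position `(i, j)` changes a determinant by `c` times the `(i, j)` cofactor, so
`det (λ • 1 - H)` is a combination of principal minors of `T`, which are again alternating
tridiagonal determinants, and of the two off-corner minors, which are triangular with
determinant `∏ (-tᵢ)`. Expanding along the first row, the alternating determinants satisfy
`D_{m+2}(a, b) = λ D_{m+1}(b, a) - a² D_m(a, b)`: the two hoppings swap roles at every step,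
and two steps together reproduce, via `2 Q t₁ t₂ = λ² - t₁² - t₂²`, the Chebyshev recurrence
of `(t₁ t₂)ʲ U_j(Q)`.
-/

section RankOneUpdate

variable {R : Type*} [CommRing R] {m : ℕ}

theorem det_add_single (A : Matrix (Fin (m + 1)) (Fin (m + 1)) R) (i j : Fin (m + 1)) (c : R) :
    det (A + single i j c) =
      det A + (-1) ^ (i + j : ℕ) * c * det (A.submatrix i.succAbove j.succAbove) := by
  have hminor : ∀ k : Fin (m + 1), (A + single i j c).submatrix i.succAbove k.succAbove =
      A.submatrix i.succAbove k.succAbove := fun k => by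
    ext a b
    simp [(Fin.succAbove_ne i a).symm]
  rw [det_succ_row _ i, det_succ_row A i]
  simp only [hminor, Matrix.add_apply, mul_add, add_mul, Finset.sum_add_distrib, add_right_inj]
  simp [single_apply]

variable {ι κ n o : Type*} [DecidableEq n] [DecidableEq o]

theorem submatrix_single_eq_zero_of_row_ne (f : ι → n) (g : κ → o) {i : n} (hf : ∀ k, f k ≠ i)
    (j : o) (c : R) : (single i j c).submatrix f g = 0 := by
  ext a b
  simp [(hf a).symm]

theorem submatrix_single_eq_zero_of_col_ne (f : ι → n) (g : κ → o) (i : n) {j : o}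
    (hg : ∀ k, g k ≠ j) (c : R) : (single i j c).submatrix f g = 0 := by
  ext a b
  simp [(hg b).symm]

theorem submatrix_single_of_injective [DecidableEq ι] [DecidableEq κ] {f : ι → n} {g : κ → o}
    (hf : f.Injective) (hg : g.Injective) (i : ι) (j : κ) (c : R) :
    (single (f i) (g j) c).submatrix f g = single i j c := by
  ext a b
  simp [single_apply, hf.eq_iff, hg.eq_iff]

theorem det_add_single_corners (A : Matrix (Fin (m + 2)) (Fin (m + 2)) R) (a b c d : R) :
    det (A + single 0 0 a + single (Fin.last _) (Fin.last _) c + single (Fin.last _) 0 d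
        + single 0 (Fin.last _) b) =
      det A + a * det (A.submatrix Fin.succ Fin.succ)
        + c * det (A.submatrix Fin.castSucc Fin.castSucc)
        + (a * c - b * d) * det (A.submatrix (Fin.castSucc ∘ Fin.succ) (Fin.castSucc ∘ Fin.succ))
        + (-1) ^ (m + 1) * (b * det (A.submatrix Fin.succ Fin.castSucc)
          + d * det (A.submatrix Fin.castSucc Fin.succ)) := by
  have h00 : (single (0 : Fin (m + 2)) 0 a).submatrix Fin.castSucc Fin.castSucc = single 0 0 a :=
    submatrix_single_of_injective (Fin.castSucc_injective (m + 1)) (Fin.castSucc_injective (m + 1))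
      0 0 a
  have hl0 : (single (Fin.last (m + 1)) 0 d).submatrix Fin.succ Fin.castSucc =
      single (Fin.last m) 0 d :=
    submatrix_single_of_injective (Fin.succ_injective (m + 1)) (Fin.castSucc_injective (m + 1))
      (Fin.last m) 0 d
  have hmid : (Fin.succ ∘ Fin.castSucc : Fin m → Fin (m + 2)) = Fin.castSucc ∘ Fin.succ :=
    funext Fin.succ_castSucc
  have hsign : ((-1 : R) ^ m) ^ 2 = 1 := by rw [← pow_mul, pow_mul', neg_one_sq, one_pow]
  simp only [det_add_single, Fin.succAbove_zero, Fin.succAbove_last, submatrix_add, Pi.add_apply,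
    h00, hl0, submatrix_single_eq_zero_of_row_ne Fin.succ _ Fin.succ_ne_zero,
    submatrix_single_eq_zero_of_row_ne Fin.castSucc _ Fin.castSucc_ne_last,
    submatrix_single_eq_zero_of_col_ne _ Fin.succ _ Fin.succ_ne_zero,
    submatrix_single_eq_zero_of_col_ne _ Fin.castSucc _ Fin.castSucc_ne_last,
    add_zero, submatrix_submatrix, hmid, Fin.val_zero, Fin.val_last]
  linear_combination (c * det (A.submatrix Fin.castSucc Fin.castSucc)
    + (a * c - b * d) * det (A.submatrix (Fin.castSucc ∘ Fin.succ) (Fin.castSucc ∘ Fin.succ)))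
      * hsign

end RankOneUpdate

section Tridiagonal

variable {R : Type*} [CommRing R]

def tridiag (d e : ℕ → R) (m : ℕ) : Matrix (Fin m) (Fin m) R :=
  of fun i j =>
    if (i : ℕ) = j then d i
    else if (i : ℕ) + 1 = j then e i
    else if (j : ℕ) + 1 = i then e j
    else 0

variable (d e : ℕ → R)

theorem tridiag_apply_eq_zero {m : ℕ} {i j : Fin m} (h : (i : ℕ) + 1 < j ∨ (j : ℕ) + 1 < i) :
    tridiag d e m i j = 0 := by
  simp only [tridiag, of_apply]
  split_ifs <;> first | rfl | omega

theorem tridiag_transpose (m : ℕ) : (tridiag d e m)ᵀ = tridiag d e m := by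
  ext i j
  simp only [tridiag, transpose_apply, of_apply]
  split_ifs <;> first | rfl | omega | congr 1

theorem tridiag_submatrix_castSucc (m : ℕ) :
    (tridiag d e (m + 1)).submatrix Fin.castSucc Fin.castSucc = tridiag d e m := by
  ext i j
  simp [tridiag]

theorem tridiag_submatrix_succ (m : ℕ) :
    (tridiag d e (m + 1)).submatrix Fin.succ Fin.succ =
      tridiag (fun i => d (i + 1)) (fun i => e (i + 1)) m := by
  ext i j
  simp only [tridiag, submatrix_apply, of_apply, Fin.val_succ]
  split_ifs <;> first | rfl | omega

theorem det_tridiag_submatrix_castSucc_succ (m : ℕ) :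
    det ((tridiag d e (m + 1)).submatrix Fin.castSucc Fin.succ) = ∏ i : Fin m, e i := by
  rw [det_of_isLowerTriangular]
  · refine Finset.prod_congr rfl fun i _ => ?_
    simp [tridiag]
  · intro i j (hij : (i : ℕ) < j)
    exact tridiag_apply_eq_zero d e (by simp; omega)

theorem det_tridiag_submatrix_succ_castSucc (m : ℕ) :
    det ((tridiag d e (m + 1)).submatrix Fin.succ Fin.castSucc) = ∏ i : Fin m, e i := by
  rw [← det_tridiag_submatrix_castSucc_succ, ← det_transpose, transpose_submatrix,
    tridiag_transpose]

theorem det_tridiag_add_two (m : ℕ) :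
    det (tridiag d e (m + 2)) =
      d 0 * det (tridiag (fun i => d (i + 1)) (fun i => e (i + 1)) (m + 1))
        - e 0 ^ 2 * det (tridiag (fun i => d (i + 2)) (fun i => e (i + 2)) m) := by
  have hcofactor : det ((tridiag d e (m + 2)).submatrix Fin.succ (Fin.succ 0).succAbove) =
      e 0 * det (tridiag (fun i => d (i + 2)) (fun i => e (i + 2)) m) := by
    rw [det_succ_column_zero, Fin.sum_univ_succ, Fintype.sum_eq_zero _ fun i => by
      rw [submatrix_apply, tridiag_apply_eq_zero d e (by simp), mul_zero, zero_mul]]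
    have hminor : ((tridiag d e (m + 2)).submatrix Fin.succ (Fin.succ 0).succAbove).submatrix
        Fin.succ Fin.succ = ((tridiag d e (m + 2)).submatrix Fin.succ Fin.succ).submatrix
        Fin.succ Fin.succ := by
      ext i j
      simp
    rw [add_zero, Fin.succAbove_zero, hminor, tridiag_submatrix_succ, tridiag_submatrix_succ]
    simp [tridiag]
  rw [det_succ_row_zero, Fin.sum_univ_succ, Fin.sum_univ_succ,
    Fintype.sum_eq_zero _ fun j => by rw [tridiag_apply_eq_zero d e (by simp)]; ring,
    Fin.succAbove_zero, tridiag_submatrix_succ, hcofactor]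
  simp [tridiag]
  ring

end Tridiagonal

section AlternatingSequence

variable {α : Type*}

def altSeq (a b : α) (j : ℕ) : α := if j % 2 = 0 then a else b

theorem altSeq_succ (a b : α) : (fun j => altSeq a b (j + 1)) = altSeq b a := by
  funext j
  simp only [altSeq]
  split_ifs <;> first | rfl | omega

theorem altSeq_add_two (a b : α) : (fun j => altSeq a b (j + 2)) = altSeq a b := by
  funext j
  simp [altSeq, Nat.add_mod_right]

theorem prod_altSeq [CommMonoid α] (a b : α) (j : ℕ) :
    ∏ i : Fin (2 * j + 1), altSeq a b i = a * (a * b) ^ j := by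
  induction j with
  | zero => simp [altSeq]
  | succ j ih =>
    rw [show 2 * (j + 1) + 1 = 2 * j + 1 + 1 + 1 by ring, Fin.prod_univ_castSucc,
      Fin.prod_univ_castSucc]
    simp only [Fin.val_castSucc, Fin.val_last]
    rw [ih]
    simp only [altSeq]
    rw [if_neg (by omega), if_pos (by omega), pow_succ]
    ac_rfl

end AlternatingSequence

section AlternatingChain

variable {R : Type*} [CommRing R] (lam : R)

theorem tridiag_const_altSeq_submatrix_succ (a b : R) (m : ℕ) :
    (tridiag (fun _ => lam) (altSeq a b) (m + 1)).submatrix Fin.succ Fin.succ =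
      tridiag (fun _ => lam) (altSeq b a) m := by
  rw [tridiag_submatrix_succ, altSeq_succ]

theorem det_tridiag_const_altSeq_add_two (a b : R) (m : ℕ) :
    det (tridiag (fun _ => lam) (altSeq a b) (m + 2)) =
      lam * det (tridiag (fun _ => lam) (altSeq b a) (m + 1))
        - a ^ 2 * det (tridiag (fun _ => lam) (altSeq a b) m) := by
  rw [det_tridiag_add_two, altSeq_succ, altSeq_add_two]
  simp [altSeq]

theorem det_tridiag_const_altSeq {x : R} (a b : R) (hx : 2 * x * (a * b) = lam ^ 2 - a ^ 2 - b ^ 2)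
    (j : ℕ) :
    det (tridiag (fun _ => lam) (altSeq a b) (2 * j + 1)) =
        lam * (a * b) ^ j * (Chebyshev.U R j).eval x ∧
      det (tridiag (fun _ => lam) (altSeq a b) (2 * j + 2)) =
        (a * b) ^ j *
          (a * b * (Chebyshev.U R (j + 1)).eval x + b ^ 2 * (Chebyshev.U R j).eval x) := by
  induction j generalizing a b with
  | zero =>
    have hone : ∀ a b : R, det (tridiag (fun _ => lam) (altSeq a b) 1) = lam := by
      simp [tridiag]
    simp only [Nat.mul_zero, zero_add, det_tridiag_const_altSeq_add_two, hone, det_fin_zero,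
      Nat.cast_zero, Chebyshev.U_zero, Chebyshev.U_one, eval_one, eval_mul, eval_ofNat, eval_X]
    refine ⟨by ring, by linear_combination -hx⟩
  | succ j ih =>
    have hodd : ∀ a b : R, 2 * x * (a * b) = lam ^ 2 - a ^ 2 - b ^ 2 →
        det (tridiag (fun _ => lam) (altSeq a b) (2 * (j + 1) + 1)) =
          lam * (a * b) ^ (j + 1) * (Chebyshev.U R (j + 1 : ℕ)).eval x := by
      intro a b hx
      rw [show 2 * (j + 1) + 1 = 2 * j + 1 + 2 by ring, det_tridiag_const_altSeq_add_two,
        (ih b a (by linear_combination hx)).2, (ih a b hx).1]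
      push_cast
      ring
    refine ⟨hodd a b hx, ?_⟩
    have hU : (Chebyshev.U R ((j : ℤ) + 1 + 1)).eval x =
        2 * x * (Chebyshev.U R ((j : ℤ) + 1)).eval x - (Chebyshev.U R j).eval x := by
      rw [add_assoc, one_add_one_eq_two, Chebyshev.U_add_two]
      simp
    rw [show 2 * (j + 1) + 2 = 2 * j + 2 + 2 by ring, det_tridiag_const_altSeq_add_two,
      show 2 * j + 2 + 1 = 2 * (j + 1) + 1 by ring, hodd b a (by linear_combination hx),
      (ih a b hx).2]
    push_cast
    rw [hU]
    linear_combination -(a * b) ^ (j + 1) * (Chebyshev.U R ((j : ℤ) + 1)).eval x * hx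

end AlternatingChain

theorem smul_one_sub_Hssh_eq (m : ℕ) (hm : 0 < m) (t1 t2 : ℝ) (z1 zn tL tR lam : ℂ) :
    lam • (1 : Matrix (Fin (m + 2)) (Fin (m + 2)) ℂ) - Hssh (m + 2) t1 t2 z1 zn tL tR =
      tridiag (fun _ => lam) (altSeq (-(t1 : ℂ)) (-(t2 : ℂ))) (m + 2) + single 0 0 (-z1)
        + single (Fin.last _) (Fin.last _) (-zn) + single (Fin.last _) 0 (-tR)
        + single 0 (Fin.last _) (-tL) := by
  ext i j
  simp only [Matrix.sub_apply, Matrix.smul_apply, one_apply, smul_eq_mul, Hssh, Matrix.add_apply,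
    tridiag, of_apply, altSeq, single_apply, Fin.ext_iff, Fin.val_zero, Fin.val_last]
  split_ifs <;> first | (exfalso; omega) | ring

theorem stmt14 (n k : ℕ) (t1 t2 : ℝ) (ht1 : t1 ≠ 0) (ht2 : t2 ≠ 0)
    (z1 zn tL tR : ℂ) (hk : 2 ≤ k) (hnk : n = 2*k) :
    ∀ lam : ℂ,
      (((t1 * t2 : ℝ) : ℂ))^(-(k : ℤ)) *
          Matrix.det (lam • (1 : Matrix (Fin n) (Fin n) ℂ) - Hssh n t1 t2 z1 zn tL tR) =
        (Chebyshev.U ℂ (k : ℤ)).eval ((lam^2 - (t1 : ℂ)^2 - (t2 : ℂ)^2) / (2 * t1 * t2))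
          + ((z1 * zn - tL * tR) / (t2 : ℂ)^2) *
              (Chebyshev.U ℂ ((k : ℤ) - 2)).eval ((lam^2 - (t1 : ℂ)^2 - (t2 : ℂ)^2) / (2 * t1 * t2))
          + (((t2 : ℂ)^2 - lam * (z1 + zn) + z1 * zn - tL * tR) / ((t1 : ℂ) * t2)) *
              (Chebyshev.U ℂ ((k : ℤ) - 1)).eval ((lam^2 - (t1 : ℂ)^2 - (t2 : ℂ)^2) / (2 * t1 * t2))
          - (tL + tR) / (t2 : ℂ) := by
  intro lam
  obtain ⟨r, rfl⟩ : ∃ r, k = r + 2 := ⟨k - 2, by omega⟩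
  obtain rfl : n = 2 * (r + 1) + 2 := by omega
  have ht1' : (t1 : ℂ) ≠ 0 := ofReal_ne_zero.2 ht1
  have ht2' : (t2 : ℂ) ≠ 0 := ofReal_ne_zero.2 ht2
  set x := (lam ^ 2 - (t1 : ℂ) ^ 2 - (t2 : ℂ) ^ 2) / (2 * t1 * t2) with hx_def
  have hx : 2 * x * (-(t1 : ℂ) * -(t2 : ℂ)) = lam ^ 2 - (-(t1 : ℂ)) ^ 2 - (-(t2 : ℂ)) ^ 2 := by
    rw [hx_def]
    field_simp
  have hx' : 2 * x * (-(t2 : ℂ) * -(t1 : ℂ)) = lam ^ 2 - (-(t2 : ℂ)) ^ 2 - (-(t1 : ℂ)) ^ 2 := by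
    linear_combination hx
  obtain ⟨hodd, heven⟩ := det_tridiag_const_altSeq lam _ _ hx (r + 1)
  have hodd' := (det_tridiag_const_altSeq lam _ _ hx' (r + 1)).1
  -- the middle minor appears at size `2 * (r + 1)`, not `2 * r + 2`
  have heven' : det (tridiag (fun _ => lam) (altSeq (-(t2 : ℂ)) (-(t1 : ℂ))) (2 * (r + 1))) = _ :=
    (det_tridiag_const_altSeq lam _ _ hx' r).2
  rw [smul_one_sub_Hssh_eq _ (by omega), det_add_single_corners, ← submatrix_submatrix,
    tridiag_submatrix_castSucc, tridiag_const_altSeq_submatrix_succ,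
    tridiag_const_altSeq_submatrix_succ, det_tridiag_submatrix_succ_castSucc,
    det_tridiag_submatrix_castSucc_succ, prod_altSeq, hodd, hodd', heven, heven',
    Odd.neg_one_pow ⟨r + 1, rfl⟩, _root_.zpow_neg, zpow_natCast]
  push_cast
  rw [show (r : ℤ) + 2 - 2 = r by ring, show (r : ℤ) + 2 - 1 = r + 1 by ring,
    show (r : ℤ) + 1 + 1 = r + 2 by ring]
  field_simp
  ring
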